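/- For every nonempty S ⊆ {1,…,n}, the polynomial P_S(y) = Σ_{i∈S} ∏_{T : i∈T, S⊄T} f_T(y) (inner product over all subsets T of {1,…,n} containing i but not containing S) is strictly positive at every point of the closure of Ω' = Ω ∩ {y ∈ ℝ^n : Σ_{i=1}^n F_i(y) < 1}. -/

import Mathlib

/-- The hypotheses on the function `q`. -/
def qCond (q : ℕ → ℕ) : Prop :=
  q 0 = 1 ∧ (∀ a b, q a + q b < q (max a b + 1)) ∧ ∀ a, 3 * q a ≤ q (a + 1)

/-- The affine form `f_S(y) = −q(|S|) + Σ_{i∈S} y_i`. -/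
def fS (n : ℕ) (q : ℕ → ℕ) (S : Finset (Fin n)) (y : Fin n → ℝ) : ℝ :=
  -(q S.card : ℝ) + ∑ i ∈ S, y i

/-- The region `Ω = ∩_{∅≠S⊆{1,…,n}} {f_S > 0}`. -/
def Omega (n : ℕ) (q : ℕ → ℕ) : Set (Fin n → ℝ) :=
  {y | ∀ S : Finset (Fin n), S.Nonempty → 0 < fS n q S y}

/-- The map `F : ℝ^n → ℝ^n`, `F_i = ∏_{S ∋ i} f_S`. -/
def Fmap (n : ℕ) (q : ℕ → ℕ) (y : Fin n → ℝ) : Fin n → ℝ := fun i =>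
  ∏ S ∈ Finset.univ.filter (fun S : Finset (Fin n) => i ∈ S), fS n q S y

/-- The region `Ω' = Ω ∩ {Σ_i F_i < 1}`. -/
def Omega' (n : ℕ) (q : ℕ → ℕ) : Set (Fin n → ℝ) :=
  Omega n q ∩ {y | ∑ i, Fmap n q y i < 1}

/-- The polynomial `P_S(y) = Σ_{i∈S} ∏_{T : i∈T, S⊄T} f_T(y)`. -/
def PS (n : ℕ) (q : ℕ → ℕ) (S : Finset (Fin n)) (y : Fin n → ℝ) : ℝ :=
  ∑ i ∈ S, ∏ T ∈ Finset.univ.filter (fun T : Finset (Fin n) => i ∈ T ∧ ¬ S ⊆ T), fS n q T y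

/-
On the closure of `Ω` every `f_T` with `T ≠ ∅` is nonnegative, and so is every coordinate. If
`f_T` and `f_T'` vanish there and neither of `T`, `T'` contains the other, then
`Σ_{T ∪ T'} y ≤ q(|T|) + q(|T'|) < q(max(|T|, |T'|) + 1) ≤ q(|T ∪ T'|)`,
i.e. `f_{T ∪ T'} < 0`; so the vanishing `f_T` form a chain. The zero sets not containing `S`
therefore cannot cover `S`, and an `i ∈ S` outside all of them makes the `i`-th summand of `P_S`
positive while the other summands are nonnegative.
-/

theorem Finset.exists_mem_forall_notMem_of_isChain {α : Type*} {Z : Set (Finset α)}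
    (hZ : IsChain (· ⊆ ·) Z) {S : Finset α} (hS : S.Nonempty) (hSZ : ∀ T ∈ Z, ¬S ⊆ T) :
    ∃ i ∈ S, ∀ T ∈ Z, i ∉ T := by
  by_contra! hcover
  obtain ⟨i, hi⟩ := hS
  obtain ⟨T₀, hT₀, -⟩ := hcover i hi
  obtain ⟨T, hT, hST⟩ :=
    DirectedOn.exists_mem_subset_of_finset_subset_biUnion (f := ((↑) : Finset α → Set α))
      ⟨T₀, hT₀⟩ (hZ.directedOn.mono fun _ _ h => coe_subset.2 h) (s := S) fun j hj => by
        obtain ⟨T, hT, hjT⟩ := hcover j hj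
        exact Set.mem_biUnion hT hjT
  exact hSZ T hT (coe_subset.1 hST)

open Finset

theorem Finset.max_card_lt_card_union_of_not_subset {α : Type*} [DecidableEq α]
    {T T' : Finset α} (hTT' : ¬T ⊆ T') (hT'T : ¬T' ⊆ T) : max #T #T' < #(T ∪ T') :=
  max_lt
    (card_lt_card <| subset_union_left.ssubset_of_not_subset fun h =>
      hT'T (subset_union_right.trans h))
    (card_lt_card <| subset_union_right.ssubset_of_not_subset fun h =>
      hTT' (subset_union_left.trans h))

theorem strictMono_of_add_lt_max_succ {q : ℕ → ℕ}
    (hq : ∀ a b, q a + q b < q (max a b + 1)) : StrictMono q :=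
  strictMono_nat_of_lt_succ fun a => by simpa using (hq a a).trans_le' le_add_self

section

variable {n : ℕ} {q : ℕ → ℕ} {y : Fin n → ℝ}

theorem continuous_fS (T : Finset (Fin n)) : Continuous (fS n q T) :=
  continuous_const.add (continuous_finsetSum _ fun i _ => continuous_apply i)

theorem fS_nonneg_of_mem_closure_Omega (hy : y ∈ closure (Omega n q)) {T : Finset (Fin n)}
    (hT : T.Nonempty) : 0 ≤ fS n q T y :=
  closure_minimal (fun _ hz => (hz T hT).le) (isClosed_le continuous_const (continuous_fS T)) hy

theorem nonneg_of_mem_closure_Omega (hy : y ∈ closure (Omega n q)) (i : Fin n) : 0 ≤ y i := by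
  have h := fS_nonneg_of_mem_closure_Omega hy (singleton_nonempty i)
  simp only [fS, card_singleton, sum_singleton] at h
  linarith [(q 1).cast_nonneg (α := ℝ)]

theorem isChain_zero_fS (hq : ∀ a b, q a + q b < q (max a b + 1))
    (hy : y ∈ closure (Omega n q)) :
    IsChain (· ⊆ ·) {T : Finset (Fin n) | T.Nonempty ∧ fS n q T y = 0} := by
  rintro T ⟨hT, h0⟩ T' ⟨-, h0'⟩ -
  by_contra! ⟨hTT', hT'T⟩
  have hqU : (q #T + q #T' : ℝ) < q #(T ∪ T') := by
    exact_mod_cast (hq _ _).trans_le <| (strictMono_of_add_lt_max_succ hq).monotone <|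
      max_card_lt_card_union_of_not_subset hTT' hT'T
  have hinter : 0 ≤ ∑ i ∈ T ∩ T', y i :=
    sum_nonneg fun i _ => nonneg_of_mem_closure_Omega hy i
  have hU := fS_nonneg_of_mem_closure_Omega hy (hT.mono (subset_union_left (s₂ := T')))
  have hsplit :
      ∑ i ∈ T ∪ T', y i + ∑ i ∈ T ∩ T', y i = ∑ i ∈ T, y i + ∑ i ∈ T', y i :=
    sum_union_inter
  simp only [fS] at h0 h0' hU
  linarith

theorem exists_mem_forall_fS_pos (hq : ∀ a b, q a + q b < q (max a b + 1))
    (hy : y ∈ closure (Omega n q)) {S : Finset (Fin n)} (hS : S.Nonempty) :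
    ∃ i ∈ S, ∀ T, i ∈ T → ¬S ⊆ T → 0 < fS n q T y := by
  obtain ⟨i, hiS, hi⟩ := exists_mem_forall_notMem_of_isChain
    (Z := {T | T.Nonempty ∧ fS n q T y = 0 ∧ ¬S ⊆ T})
    ((isChain_zero_fS hq hy).mono (Set.ofPred_subset_ofPred.2 fun _ hT => ⟨hT.1, hT.2.1⟩)) hS
    fun _ hT => hT.2.2
  refine ⟨i, hiS, fun T hiT hST => ?_⟩
  exact (fS_nonneg_of_mem_closure_Omega hy ⟨i, hiT⟩).lt_of_ne' fun h0 =>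
    hi T ⟨⟨i, hiT⟩, h0, hST⟩ hiT

theorem PS_pos_of_mem_closure_Omega (hq : ∀ a b, q a + q b < q (max a b + 1))
    (hy : y ∈ closure (Omega n q)) {S : Finset (Fin n)} (hS : S.Nonempty) : 0 < PS n q S y := by
  obtain ⟨i, hiS, hi⟩ := exists_mem_forall_fS_pos hq hy hS
  refine sum_pos' (fun j _ => prod_nonneg fun T hT => ?_) ⟨i, hiS, ?_⟩
  · exact fS_nonneg_of_mem_closure_Omega hy ⟨j, (mem_filter.1 hT).2.1⟩
  · exact prod_pos fun T hT => hi T (mem_filter.1 hT).2.1 (mem_filter.1 hT).2.2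

end

theorem PS_pos_on_closure_Omega'_general
    (n : ℕ) (q : ℕ → ℕ) (hq : qCond q)
    (S : Finset (Fin n)) (hS : S.Nonempty)
    (y : Fin n → ℝ) (hy : y ∈ closure (Omega' n q)) :
    0 < PS n q S y :=
  PS_pos_of_mem_closure_Omega hq.2.1 (closure_mono Set.inter_subset_left hy) hS

theorem PS_pos_on_closure_Omega'
    (n : ℕ) (hn : 1 ≤ n) (q : ℕ → ℕ) (hq : qCond q)
    (S : Finset (Fin n)) (hS : S.Nonempty)
    (y : Fin n → ℝ) (hy : y ∈ closure (Omega' n q)) :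
    0 < PS n q S y :=
  PS_pos_on_closure_Omega'_general n q hq S hS y hy
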